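/- arXiv:2212.14139 — 2 statements merged into one kernel-verified Lean document; each statement's English description precedes it below -/
import Mathlib

section
/- Let b be a nonzero integer with b ≠ 3 such that −b is not a perfect square, and suppose b has a prime divisor p with p ≡ 3 (mod 8) or p ≡ 5 (mod 8). Then X, Y ∈ M₂(ℤ) satisfy X² + bY² = 2I if and only if one of the following holds: (i) X = [[t₁, t₂],[t₃, −t₁]] and Y = [[s₁, s₂],[s₃, −s₁]] for integers with t₁² + t₂t₃ + b(s₁² + s₂s₃) = 2; (ii) b > 0 and X = [[t₁, t₂],[t₃, −t₁]], Y = t₄I for integers with t₁² + t₂t₃ + b·t₄² = 2; (iii) b < 0 and there exist integers t₁, t₂, t₃, t₄, u, v, x, y with u ≠ 2, g = gcd(v, u − 2), such that 2x = u·t₁ + v·b·t₄ and 2y = v·t₁ − u·t₄, X = [[t₁, ((u−2)/g)·t₂],[((u−2)/g)·t₃, x]], Y = [[t₄, (v/g)·t₂],[(v/g)·t₃, y]], and the relations u² + bv² = 4 and g²(t₁² + b·t₄²) + 4t₂t₃·(2 − u) = 2g² hold. -/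
/-!
Since `X² = (tr X) X - (det X) I` for `2 × 2` matrices, the equation `X² + bY² = 2I` is the linear
relation `s X + b t Y = c I` with `s = tr X`, `t = tr Y`, `c = 2 + det X + b det Y`; its trace
is `s² + b t² = 2c`.

If `t = 0` and `s ≠ 0`, then `X` is scalar, say `x I`, and `x² ≡ 2 (mod p)`, which is impossible
for `p ≡ ±3 (mod 8)`; so both matrices are traceless.

If `t ≠ 0`, then `c ≠ 0` because `-b` is not a square, and the rationals `u = 2s²/c - 2`,
`v = 2st/c` are in fact the integers `det X - b det Y` and `st - tr (XY)`. They satisfy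
`u² + bv² = 4`, the diagonals of `X` and `Y` are linear in `(x₁₁, y₁₁)` with coefficients from
`u, v`, and `(x₁₂, y₁₂)`, `(x₂₁, y₂₁)` are both proportional to `(u - 2, v)`. Dividing `(u - 2, v)`
by its gcd gives the parametrisation for `b < 0`. For `b > 0`, `v ≠ 0` would force
`b ≤ b v² ≤ 4`, hence `b = 3`; so `v = 0`, `u = -2`, and `Y` is scalar.
-/

theorem sq_add_mul_sq_ne_zero {b : ℤ} (hb : ¬ ∃ r : ℤ, -b = r ^ 2) (s : ℤ) {t : ℤ} (ht : t ≠ 0) :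
    s ^ 2 + b * t ^ 2 ≠ 0 := by
  intro h
  obtain ⟨r, hr⟩ := (Int.pow_dvd_pow_iff two_ne_zero).mp
    (Dvd.intro (-b) (by linear_combination -h) : t ^ 2 ∣ s ^ 2)
  refine hb ⟨r, mul_left_cancel₀ (pow_ne_zero 2 ht) ?_⟩
  linear_combination -h + (s + t * r) * hr

theorem sq_add_mul_ne_two {p : ℕ} [Fact p.Prime] (hp8 : p % 8 = 3 ∨ p % 8 = 5) {b : ℤ}
    (hpb : (p : ℤ) ∣ b) (a m : ℤ) : a ^ 2 + b * m ≠ 2 := by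
  intro h
  have hb : (b : ZMod p) = 0 := (ZMod.intCast_zmod_eq_zero_iff_dvd b p).mpr hpb
  have h2 : IsSquare (2 : ZMod p) :=
    ⟨a, by simpa [hb, sq] using (congrArg (Int.cast : ℤ → ZMod p) h).symm⟩
  rw [ZMod.exists_sq_eq_two_iff (by omega)] at h2
  omega

theorem Int.exists_eq_ediv_gcd_mul {m n a d : ℤ} (hn : n ≠ 0) (h : a * m = d * n) :
    ∃ t, a = n / m.gcd n * t ∧ d = m / m.gcd n * t := by
  have hg : 0 < m.gcd n := Int.gcd_pos_of_ne_zero_right m hn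
  have hcop : IsCoprime (m / m.gcd n) (n / m.gcd n) :=
    Int.isCoprime_iff_gcd_eq_one.mpr (Int.gcd_ediv_gcd_ediv_gcd hg)
  have hm : m / m.gcd n * m.gcd n = m := Int.ediv_mul_cancel (Int.gcd_dvd_left m n)
  have hn' : n / m.gcd n * m.gcd n = n := Int.ediv_mul_cancel (Int.gcd_dvd_right m n)
  set g : ℤ := (m.gcd n : ℤ)
  set m' := m / g
  set n' := n / g
  have h' : a * m' = d * n' :=
    mul_right_cancel₀ (by positivity : g ≠ 0) (by linear_combination h + a * hm - d * hn')
  obtain ⟨t, ht⟩ : n' ∣ a := hcop.symm.dvd_of_dvd_mul_right (Dvd.intro d (by rw [h']; ring))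
  refine ⟨t, ht, mul_left_cancel₀ (a := n') ?_ ?_⟩
  · rintro h0; rw [h0, zero_mul] at hn'; exact hn hn'.symm
  · linear_combination -h' + m' * ht

theorem gcd_sq_mul_ediv_gcd_sq_add {b u v : ℤ} (h : u ^ 2 + b * v ^ 2 = 4) :
    (v.gcd (u - 2) : ℤ) ^ 2 * (((u - 2) / v.gcd (u - 2)) ^ 2 + b * (v / v.gcd (u - 2)) ^ 2) =
      4 * (2 - u) := by
  have hu := Int.ediv_mul_cancel (Int.gcd_dvd_right v (u - 2))
  have hv := Int.ediv_mul_cancel (Int.gcd_dvd_left v (u - 2))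
  set g : ℤ := (v.gcd (u - 2) : ℤ)
  linear_combination h + ((u - 2) / g * g + (u - 2)) * hu + b * (v / g * g + v) * hv

theorem Matrix.fin_two_sq_add_smul_sq_eq_two_iff {R : Type*} [CommRing R]
    (b x₁₁ x₁₂ x₂₁ x₂₂ y₁₁ y₁₂ y₂₁ y₂₂ : R) :
    !![x₁₁, x₁₂; x₂₁, x₂₂] ^ 2 + b • !![y₁₁, y₁₂; y₂₁, y₂₂] ^ 2 = (2 : R) • 1 ↔
      x₁₁ ^ 2 + x₁₂ * x₂₁ + b * (y₁₁ ^ 2 + y₁₂ * y₂₁) = 2 ∧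
      x₁₂ * (x₁₁ + x₂₂) + b * y₁₂ * (y₁₁ + y₂₂) = 0 ∧
      x₂₁ * (x₁₁ + x₂₂) + b * y₂₁ * (y₁₁ + y₂₂) = 0 ∧
      x₂₂ ^ 2 + x₁₂ * x₂₁ + b * (y₂₂ ^ 2 + y₁₂ * y₂₁) = 2 := by
  rw [sq, sq, Matrix.mul_fin_two, Matrix.mul_fin_two, Matrix.smul_of, ← Matrix.ext_iff]
  simp only [smul_cons, smul_eq_mul, smul_empty, add_apply, of_apply, cons_val', cons_val_fin_one,
    one_fin_two, smul_apply, Fin.forall_fin_two, Fin.isValue, cons_val_zero, cons_val_one, mul_one,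
    mul_zero]
  ring_nf
  exact and_assoc

section

variable {b x₁₁ x₁₂ x₂₁ x₂₂ y₁₁ y₁₂ y₂₁ y₂₂ : ℤ}

theorem exists_sq_add_mul_sq_eq_four_of_trace_ne_zero (hb : b ≠ 0) (hnsq : ¬ ∃ r : ℤ, -b = r ^ 2)
    (h : !![x₁₁, x₁₂; x₂₁, x₂₂] ^ 2 + b • !![y₁₁, y₁₂; y₂₁, y₂₂] ^ 2 = (2 : ℤ) • 1)
    (ht : y₁₁ + y₂₂ ≠ 0) :
    ∃ u v : ℤ, u ≠ 2 ∧ u ^ 2 + b * v ^ 2 = 4 ∧ 2 * x₂₂ = u * x₁₁ + v * b * y₁₁ ∧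
      2 * y₂₂ = v * x₁₁ - u * y₁₁ ∧ x₁₂ * v = y₁₂ * (u - 2) ∧ x₂₁ * v = y₂₁ * (u - 2) := by
  obtain ⟨e₁₁, e₁₂, e₂₁, e₂₂⟩ := (Matrix.fin_two_sq_add_smul_sq_eq_two_iff ..).mp h
  obtain ⟨s, rfl⟩ : ∃ s, x₂₂ = s - x₁₁ := ⟨x₁₁ + x₂₂, by ring⟩
  obtain ⟨t, rfl⟩ : ∃ t, y₂₂ = t - y₁₁ := ⟨y₁₁ + y₂₂, by ring⟩
  simp only [add_sub_cancel] at e₁₂ e₂₁ ht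
  -- `s X + b t Y = c I`
  obtain ⟨c, hc⟩ : ∃ c, s * x₁₁ + b * t * y₁₁ = c := ⟨_, rfl⟩
  have hst : s ^ 2 + b * t ^ 2 = 2 * c := by linear_combination e₂₂ - e₁₁ + 2 * hc
  have hc0 : c ≠ 0 := by
    rintro rfl
    exact sq_add_mul_sq_ne_zero hnsq s ht (by linear_combination hst)
  -- `u = 2s²/c - 2` and `v = 2st/c`, by `hcu_add` and `hcv`
  obtain ⟨u, hu⟩ : ∃ u, x₁₁ * (s - x₁₁) - x₁₂ * x₂₁ - b * (y₁₁ * (t - y₁₁) - y₁₂ * y₂₁) = u :=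
    ⟨_, rfl⟩
  obtain ⟨v, hv⟩ :
      ∃ v, s * t - (x₁₁ * y₁₁ + x₁₂ * y₂₁ + x₂₁ * y₁₂ + (s - x₁₁) * (t - y₁₁)) = v := ⟨_, rfl⟩
  have hcu_add : c * (u + 2) = 2 * s ^ 2 := by
    linear_combination (s ^ 2 - c) * e₁₁ - x₂₁ * s * e₁₂ + b * y₁₂ * t * e₂₁
      - b * (y₁₁ ^ 2 + y₁₂ * y₂₁) * hst - c * hu - (s * x₁₁ - b * t * y₁₁) * hc
  have hcu_sub : c * (2 - u) = 2 * b * t ^ 2 := by linear_combination -2 * hst - hcu_add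
  have hbtv : b * t * v = s * (2 - u) := by
    linear_combination -b * t * hv - s * hu - x₁₂ * e₂₁ - x₂₁ * e₁₂ + s * e₁₁ + x₁₁ * hst
      - 2 * x₁₁ * hc
  have hcv : c * v = 2 * s * t :=
    mul_left_cancel₀ (mul_ne_zero hb ht) (by linear_combination c * hbtv + s * hcu_sub)
  refine ⟨u, v, ?_, ?_, ?_, ?_, ?_, ?_⟩
  · rintro rfl
    exact mul_ne_zero (mul_ne_zero two_ne_zero hb) (pow_ne_zero 2 ht)
      (by linear_combination -hcu_sub)
  · refine mul_left_cancel₀ (pow_ne_zero 2 hc0) ?_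
    linear_combination (c * u + 2 * s ^ 2 - 2 * c) * hcu_add + b * (c * v + 2 * s * t) * hcv
      + 4 * s ^ 2 * hst
  · exact mul_left_cancel₀ hc0
      (by linear_combination -2 * s * hc - x₁₁ * hcu_add - b * y₁₁ * hcv)
  · exact mul_left_cancel₀ hc0
      (by linear_combination 2 * y₁₁ * hst - 2 * t * hc - x₁₁ * hcv + y₁₁ * hcu_add)
  · exact mul_left_cancel₀ hc0 (by linear_combination 2 * t * e₁₂ + x₁₂ * hcv + y₁₂ * hcu_sub)
  · exact mul_left_cancel₀ hc0 (by linear_combination 2 * t * e₂₁ + x₂₁ * hcv + y₂₁ * hcu_sub)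

theorem sq_add_smul_sq_eq_two_of_sq_add_mul_sq_eq_four {u v : ℤ} (hu : u ≠ 2)
    (huv : u ^ 2 + b * v ^ 2 = 4)
    (hx : 2 * x₂₂ = u * x₁₁ + v * b * y₁₁) (hy : 2 * y₂₂ = v * x₁₁ - u * y₁₁)
    (h₁₂ : x₁₂ * v = y₁₂ * (u - 2)) (h₂₁ : x₂₁ * v = y₂₁ * (u - 2))
    (e₁₁ : x₁₁ ^ 2 + x₁₂ * x₂₁ + b * (y₁₁ ^ 2 + y₁₂ * y₂₁) = 2) :
    !![x₁₁, x₁₂; x₂₁, x₂₂] ^ 2 + b • !![y₁₁, y₁₂; y₂₁, y₂₂] ^ 2 = (2 : ℤ) • 1 := by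
  have hu2 : 2 * (u - 2) ≠ 0 := mul_ne_zero two_ne_zero (sub_ne_zero.mpr hu)
  refine (Matrix.fin_two_sq_add_smul_sq_eq_two_iff ..).mpr ⟨e₁₁, ?_, ?_, ?_⟩
  · refine mul_left_cancel₀ hu2 ?_
    linear_combination x₁₂ * (u - 2) * hx + b * x₁₂ * v * hy - 2 * b * (y₁₁ + y₂₂) * h₁₂
      + x₁₂ * x₁₁ * huv
  · refine mul_left_cancel₀ hu2 ?_
    linear_combination x₂₁ * (u - 2) * hx + b * x₂₁ * v * hy - 2 * b * (y₁₁ + y₂₂) * h₂₁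
      + x₂₁ * x₁₁ * huv
  · refine mul_left_cancel₀ (four_ne_zero : (4 : ℤ) ≠ 0) ?_
    linear_combination 4 * e₁₁ + (2 * x₂₂ + u * x₁₁ + v * b * y₁₁) * hx
      + b * (2 * y₂₂ + v * x₁₁ - u * y₁₁) * hy + (x₁₁ ^ 2 + b * y₁₁ ^ 2) * huv

theorem exists_traceless_of_trace_eq_zero {p : ℕ} [Fact p.Prime] (hp8 : p % 8 = 3 ∨ p % 8 = 5)
    (hpb : (p : ℤ) ∣ b)
    (h : !![x₁₁, x₁₂; x₂₁, x₂₂] ^ 2 + b • !![y₁₁, y₁₂; y₂₁, y₂₂] ^ 2 = (2 : ℤ) • 1)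
    (ht : y₁₁ + y₂₂ = 0) :
    ∃ t₁ t₂ t₃ s₁ s₂ s₃ : ℤ, !![x₁₁, x₁₂; x₂₁, x₂₂] = !![t₁, t₂; t₃, -t₁] ∧
      !![y₁₁, y₁₂; y₂₁, y₂₂] = !![s₁, s₂; s₃, -s₁] ∧
      t₁ ^ 2 + t₂ * t₃ + b * (s₁ ^ 2 + s₂ * s₃) = 2 := by
  obtain ⟨e₁₁, e₁₂, -, -⟩ := (Matrix.fin_two_sq_add_smul_sq_eq_two_iff ..).mp h
  have hs : x₁₁ + x₂₂ = 0 := by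
    by_contra hs
    rw [ht, mul_zero, add_zero] at e₁₂
    have hx₁₂ : x₁₂ = 0 := (mul_eq_zero.mp e₁₂).resolve_right hs
    exact sq_add_mul_ne_two hp8 hpb x₁₁ (y₁₁ ^ 2 + y₁₂ * y₂₁)
      (by linear_combination e₁₁ - x₂₁ * hx₁₂)
  rw [eq_neg_of_add_eq_zero_right hs, eq_neg_of_add_eq_zero_right ht]
  exact ⟨x₁₁, x₁₂, x₂₁, y₁₁, y₁₂, y₂₁, rfl, rfl, e₁₁⟩

theorem exists_scalar_of_trace_ne_zero_of_pos {p : ℕ} (hp8 : p % 8 = 3 ∨ p % 8 = 5)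
    (hpb : (p : ℤ) ∣ b) (hb : 0 < b) (hb3 : b ≠ 3) (hnsq : ¬ ∃ r : ℤ, -b = r ^ 2)
    (h : !![x₁₁, x₁₂; x₂₁, x₂₂] ^ 2 + b • !![y₁₁, y₁₂; y₂₁, y₂₂] ^ 2 = (2 : ℤ) • 1)
    (ht : y₁₁ + y₂₂ ≠ 0) :
    ∃ t₁ t₂ t₃ t₄ : ℤ, !![x₁₁, x₁₂; x₂₁, x₂₂] = !![t₁, t₂; t₃, -t₁] ∧
      !![y₁₁, y₁₂; y₂₁, y₂₂] = t₄ • (1 : Matrix (Fin 2) (Fin 2) ℤ) ∧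
      t₁ ^ 2 + t₂ * t₃ + b * t₄ ^ 2 = 2 := by
  obtain ⟨e₁₁, -, -, -⟩ := (Matrix.fin_two_sq_add_smul_sq_eq_two_iff ..).mp h
  obtain ⟨u, v, hu, huv, hx, hy, h₁₂, h₂₁⟩ :=
    exists_sq_add_mul_sq_eq_four_of_trace_ne_zero hb.ne' hnsq h ht
  have hv : v = 0 := by
    by_contra hv
    have hv2 : 0 < v ^ 2 := by positivity
    have hb4 : b ≤ 4 := by nlinarith [sq_nonneg u]
    have hp3 : p = 3 := by have := Int.le_of_dvd hb hpb; omega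
    subst hp3
    omega
  subst hv
  obtain rfl : u = -2 :=
    (sq_eq_sq_iff_eq_or_eq_neg.mp (by linear_combination huv : u ^ 2 = 2 ^ 2)).resolve_left hu
  obtain rfl : y₁₂ = 0 := by linarith
  obtain rfl : y₂₁ = 0 := by linarith
  refine ⟨x₁₁, x₁₂, x₂₁, y₁₁, ?_, ?_, by linear_combination e₁₁⟩
  · rw [show x₂₂ = -x₁₁ by linarith]
  · rw [show y₂₂ = y₁₁ by linarith, Matrix.smul_one_eq_diagonal, Matrix.diagonal_fin_two]

theorem exists_gcd_param_of_trace_ne_zero (hb : b ≠ 0) (hnsq : ¬ ∃ r : ℤ, -b = r ^ 2)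
    (h : !![x₁₁, x₁₂; x₂₁, x₂₂] ^ 2 + b • !![y₁₁, y₁₂; y₂₁, y₂₂] ^ 2 = (2 : ℤ) • 1)
    (ht : y₁₁ + y₂₂ ≠ 0) :
    ∃ t₁ t₂ t₃ t₄ u v x y g : ℤ, u ≠ 2 ∧ g = Int.gcd v (u - 2) ∧
      2 * x = u * t₁ + v * b * t₄ ∧ 2 * y = v * t₁ - u * t₄ ∧
      !![x₁₁, x₁₂; x₂₁, x₂₂] = !![t₁, ((u - 2) / g) * t₂; ((u - 2) / g) * t₃, x] ∧
      !![y₁₁, y₁₂; y₂₁, y₂₂] = !![t₄, (v / g) * t₂; (v / g) * t₃, y] ∧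
      u ^ 2 + b * v ^ 2 = 4 ∧
      g ^ 2 * (t₁ ^ 2 + b * t₄ ^ 2) + 4 * t₂ * t₃ * (2 - u) = 2 * g ^ 2 := by
  obtain ⟨e₁₁, -, -, -⟩ := (Matrix.fin_two_sq_add_smul_sq_eq_two_iff ..).mp h
  obtain ⟨u, v, hu, huv, hx, hy, h₁₂, h₂₁⟩ :=
    exists_sq_add_mul_sq_eq_four_of_trace_ne_zero hb hnsq h ht
  obtain ⟨t₂, rfl, rfl⟩ := Int.exists_eq_ediv_gcd_mul (sub_ne_zero.mpr hu) h₁₂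
  obtain ⟨t₃, rfl, rfl⟩ := Int.exists_eq_ediv_gcd_mul (sub_ne_zero.mpr hu) h₂₁
  refine ⟨x₁₁, t₂, t₃, y₁₁, u, v, x₂₂, y₂₂, _, hu, rfl, hx, hy, rfl, rfl, huv, ?_⟩
  linear_combination (v.gcd (u - 2) : ℤ) ^ 2 * e₁₁ - t₂ * t₃ * gcd_sq_mul_ediv_gcd_sq_add huv

theorem sq_add_smul_sq_eq_two_of_gcd_param {t₁ t₂ t₃ t₄ u v x y g : ℤ} (hu : u ≠ 2)
    (hg : g = Int.gcd v (u - 2)) (hx : 2 * x = u * t₁ + v * b * t₄)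
    (hy : 2 * y = v * t₁ - u * t₄)
    (huv : u ^ 2 + b * v ^ 2 = 4)
    (h : g ^ 2 * (t₁ ^ 2 + b * t₄ ^ 2) + 4 * t₂ * t₃ * (2 - u) = 2 * g ^ 2) :
    !![t₁, ((u - 2) / g) * t₂; ((u - 2) / g) * t₃, x] ^ 2 +
      b • !![t₄, (v / g) * t₂; (v / g) * t₃, y] ^ 2 = (2 : ℤ) • 1 := by
  have hg0 : g ≠ 0 := by
    rw [hg]; exact_mod_cast (Int.gcd_pos_of_ne_zero_right v (sub_ne_zero.mpr hu)).ne'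
  have hgu : (u - 2) / g * g = u - 2 := Int.ediv_mul_cancel (hg ▸ Int.gcd_dvd_right v (u - 2))
  have hgv : v / g * g = v := Int.ediv_mul_cancel (hg ▸ Int.gcd_dvd_left v (u - 2))
  refine sq_add_smul_sq_eq_two_of_sq_add_mul_sq_eq_four hu huv hx hy ?_ ?_ ?_
  · linear_combination -((u - 2) / g * t₂) * hgv + v / g * t₂ * hgu
  · linear_combination -((u - 2) / g * t₃) * hgv + v / g * t₃ * hgu
  · refine mul_left_cancel₀ (pow_ne_zero 2 hg0) ?_
    subst hg
    linear_combination h + t₂ * t₃ * gcd_sq_mul_ediv_gcd_sq_add huv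

end

section

variable {R : Type*} [CommRing R] {b : R}

theorem sq_add_smul_sq_eq_two_of_traceless {t₁ t₂ t₃ s₁ s₂ s₃ : R}
    (h : t₁ ^ 2 + t₂ * t₃ + b * (s₁ ^ 2 + s₂ * s₃) = 2) :
    !![t₁, t₂; t₃, -t₁] ^ 2 + b • !![s₁, s₂; s₃, -s₁] ^ 2 = (2 : R) • 1 :=
  (Matrix.fin_two_sq_add_smul_sq_eq_two_iff ..).mpr ⟨h, by ring, by ring, by linear_combination h⟩

theorem sq_add_smul_sq_eq_two_of_scalar {t₁ t₂ t₃ t₄ : R}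
    (h : t₁ ^ 2 + t₂ * t₃ + b * t₄ ^ 2 = 2) :
    !![t₁, t₂; t₃, -t₁] ^ 2 + b • (t₄ • (1 : Matrix (Fin 2) (Fin 2) R)) ^ 2 = (2 : R) • 1 := by
  rw [Matrix.smul_one_eq_diagonal, Matrix.diagonal_fin_two]
  exact (Matrix.fin_two_sq_add_smul_sq_eq_two_iff ..).mpr
    ⟨by linear_combination h, by ring, by ring, by linear_combination h⟩

end

theorem stmt_18 (b : ℤ) (hb : b ≠ 0) (hb3 : b ≠ 3) (hnsq : ¬ ∃ s : ℤ, -b = s ^ 2)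
    (hp : ∃ p : ℕ, p.Prime ∧ (p : ℤ) ∣ b ∧ (p % 8 = 3 ∨ p % 8 = 5))
    (X Y : Matrix (Fin 2) (Fin 2) ℤ) :
    (X ^ 2 + b • Y ^ 2 = (2 : ℤ) • (1 : Matrix (Fin 2) (Fin 2) ℤ)) ↔
    ((∃ t₁ t₂ t₃ s₁ s₂ s₃ : ℤ, X = !![t₁, t₂; t₃, -t₁] ∧ Y = !![s₁, s₂; s₃, -s₁] ∧
        t₁ ^ 2 + t₂ * t₃ + b * (s₁ ^ 2 + s₂ * s₃) = 2) ∨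
     (b > 0 ∧ ∃ t₁ t₂ t₃ t₄ : ℤ, X = !![t₁, t₂; t₃, -t₁] ∧
        Y = t₄ • (1 : Matrix (Fin 2) (Fin 2) ℤ) ∧ t₁ ^ 2 + t₂ * t₃ + b * t₄ ^ 2 = 2) ∨
     (b < 0 ∧ ∃ t₁ t₂ t₃ t₄ u v x y g : ℤ, u ≠ 2 ∧ g = Int.gcd v (u - 2) ∧
        2 * x = u * t₁ + v * b * t₄ ∧ 2 * y = v * t₁ - u * t₄ ∧
        X = !![t₁, ((u - 2) / g) * t₂; ((u - 2) / g) * t₃, x] ∧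
        Y = !![t₄, (v / g) * t₂; (v / g) * t₃, y] ∧
        u ^ 2 + b * v ^ 2 = 4 ∧
        g ^ 2 * (t₁ ^ 2 + b * t₄ ^ 2) + 4 * t₂ * t₃ * (2 - u) = 2 * g ^ 2)) := by
  obtain ⟨p, hp, hpb, hp8⟩ := hp
  have : Fact p.Prime := ⟨hp⟩
  constructor
  · intro h
    rw [X.eta_fin_two, Y.eta_fin_two] at h ⊢
    by_cases ht : Y 0 0 + Y 1 1 = 0
    · exact .inl (exists_traceless_of_trace_eq_zero hp8 hpb h ht)
    rcases hb.lt_or_gt with hneg | hpos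
    · exact .inr (.inr ⟨hneg, exists_gcd_param_of_trace_ne_zero hb hnsq h ht⟩)
    · exact .inr (.inl ⟨hpos, exists_scalar_of_trace_ne_zero_of_pos hp8 hpb hpos hb3 hnsq h ht⟩)
  · rintro (⟨t₁, t₂, t₃, s₁, s₂, s₃, rfl, rfl, h⟩ | ⟨-, t₁, t₂, t₃, t₄, rfl, rfl, h⟩ |
      ⟨-, t₁, t₂, t₃, t₄, u, v, x, y, g, hu, hg, hx, hy, rfl, rfl, huv, h⟩)
    · exact sq_add_smul_sq_eq_two_of_traceless h
    · exact sq_add_smul_sq_eq_two_of_scalar h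
    · exact sq_add_smul_sq_eq_two_of_gcd_param hu hg hx hy huv h
end

section
/- Let b be a nonzero integer such that −b is not a perfect square, and suppose b has a prime divisor p with p ≡ 5 (mod 8) or p ≡ 7 (mod 8). Then X, Y ∈ M₂(ℤ) satisfy X² + bY² = −2I if and only if one of the following holds: (i) X = [[t₁, t₂],[t₃, −t₁]] and Y = [[s₁, s₂],[s₃, −s₁]] for integers with t₁² + t₂t₃ + b(s₁² + s₂s₃) = −2; (ii) b > 0 and X = [[t₁, t₂],[t₃, −t₁]], Y = t₄I for integers with t₁² + t₂t₃ + b·t₄² = −2; (iii) b < 0 and there exist integers t₁, t₂, t₃, t₄, u, v, x, y with u ≠ −2, g = gcd(v, u + 2), such that −2x = u·t₁ + v·b·t₄ and −2y = v·t₁ − u·t₄, X = [[t₁, ((u+2)/g)·t₂],[((u+2)/g)·t₃, x]], Y = [[t₄, (v/g)·t₂],[(v/g)·t₃, y]], and the relations u² + bv² = 4 and g²(t₁² + b·t₄²) + 4t₂t₃·(2 + u) = −2g² hold. -/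
/-!
Write `T = tr X` and `S = tr Y`. By Cayley–Hamilton the equation `X² + bY² = -2` says that
`T X + b S Y = c I` with `2c = T² + bS²`, plus one scalar equation. If `T = S = 0` this is
family (i). If only `S ≠ 0`, then `Y` is scalar, which gives (ii), or (iii) with `(u, v) = (2, 0)`
when `b < 0`. If only `T ≠ 0`, then `X` is scalar and its diagonal entry squares to `-2` modulo
`p`, which is impossible for `p ≡ 5, 7 (mod 8)`. If both traces are nonzero, `c ≠ 0` because `-b`
is not a square, and `u = (bS² - T²)/c`, `v = -2ST/c` are integers with `u² + bv² = 4` and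
`v ≠ 0`; as `b` has a prime factor `p ≥ 5`, this forces `b < 0`. The off-diagonal entries of `X`
and `Y` are then proportional in the ratio `(u + 2) : v`, and dividing by `gcd(v, u + 2)` gives
the parametrisation (iii).
-/

open Matrix

theorem Int.exists_eq_ediv_gcd_mul_of_mul_eq {m n a c : ℤ} (hn : n ≠ 0) (h : m * a = n * c) :
    ∃ t, a = n / m.gcd n * t ∧ c = m / m.gcd n * t := by
  have hg : 0 < m.gcd n := Int.gcd_pos_of_ne_zero_right m hn
  have hg₀ : (m.gcd n : ℤ) ≠ 0 := by exact_mod_cast hg.ne'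
  have hcop := Int.gcd_div_gcd_div_gcd hg
  obtain ⟨m', hm⟩ := Int.gcd_dvd_left m n
  obtain ⟨n', hn'⟩ := Int.gcd_dvd_right m n
  generalize (m.gcd n : ℤ) = g at hm hn' hcop hg₀ ⊢
  subst hm hn'
  simp only [Int.mul_ediv_cancel_left _ hg₀] at hcop ⊢
  have h' : m' * a = n' * c := mul_left_cancel₀ hg₀ (by linear_combination h)
  obtain ⟨t, rfl⟩ : n' ∣ a :=
    Int.dvd_of_dvd_mul_left_of_gcd_one ⟨c, by rw [mul_comm, h']⟩ (by rw [Int.gcd_comm, hcop])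
  exact ⟨t, rfl, mul_left_cancel₀ (right_ne_zero_of_mul hn) (by linear_combination -h')⟩

theorem Int.not_sq_modEq_neg_two {p : ℕ} [Fact p.Prime] (hp : p % 8 = 5 ∨ p % 8 = 7) (a : ℤ) :
    ¬ a ^ 2 ≡ -2 [ZMOD p] := by
  intro h
  have hsq : IsSquare (-2 : ZMod p) := ⟨a, by
    rw [← sq]; exact_mod_cast ((ZMod.intCast_eq_intCast_iff _ _ p).2 h).symm⟩
  rw [ZMod.exists_sq_eq_neg_two_iff (by rintro rfl; omega)] at hsq
  omega

theorem Int.sq_add_mul_sq_ne_zero {b : ℤ} (hnsq : ¬ ∃ s : ℤ, -b = s ^ 2) (T : ℤ) {S : ℤ}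
    (hS : S ≠ 0) : T ^ 2 + b * S ^ 2 ≠ 0 := by
  intro h
  obtain ⟨k, rfl⟩ : S ∣ T := (Int.pow_dvd_pow_iff two_ne_zero).mp ⟨-b, by linear_combination h⟩
  refine hnsq ⟨k, mul_left_cancel₀ (pow_ne_zero 2 hS) ?_⟩
  linear_combination -h

theorem Int.neg_of_sq_add_mul_sq_eq_four {b u v : ℤ} (huv : u ^ 2 + b * v ^ 2 = 4) (hv : v ≠ 0)
    (hb : b ≠ 0) {p : ℕ} (hp : 5 ≤ p) (hpb : (p : ℤ) ∣ b) : b < 0 := by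
  refine hb.lt_or_gt.resolve_right fun hb₀ => ?_
  have hpb' : (p : ℤ) ≤ b := Int.le_of_dvd hb₀ hpb
  have hv₂ : 0 < v ^ 2 := sq_pos_of_ne_zero hv
  nlinarith [sq_nonneg u]

theorem Matrix.fin_two_sq_add_smul_sq_eq_neg_two_iff {R : Type*} [CommRing R]
    (b x₁ x₂ x₃ x₄ y₁ y₂ y₃ y₄ : R) :
    !![x₁, x₂; x₃, x₄] ^ 2 + b • !![y₁, y₂; y₃, y₄] ^ 2 =
        (-2 : R) • (1 : Matrix (Fin 2) (Fin 2) R) ↔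
      x₁ ^ 2 + x₂ * x₃ + b * (y₁ ^ 2 + y₂ * y₃) = -2 ∧
      (x₁ + x₄) * x₂ + b * (y₁ + y₄) * y₂ = 0 ∧
      (x₁ + x₄) * x₃ + b * (y₁ + y₄) * y₃ = 0 ∧
      x₄ ^ 2 + x₂ * x₃ + b * (y₄ ^ 2 + y₂ * y₃) = -2 := by
  rw [sq, sq, mul_fin_two, mul_fin_two, one_fin_two, ← Matrix.ext_iff]
  simp only [Fin.forall_fin_two, smul_of, smul_cons, smul_eq_mul, smul_empty, add_apply, of_apply,
    cons_val', cons_val_zero, cons_val_fin_one, cons_val_one, mul_one, mul_zero, and_assoc]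
  exact and_congr (by ring_nf) (and_congr (by ring_nf) (and_congr (by ring_nf) (by ring_nf)))

theorem sq_mul_corner_eq_of_norm_eq_four {R : Type*} [CommRing R] {b u v g n m : R}
    (hn : g * n = u + 2) (hm : g * m = v) (huv : u ^ 2 + b * v ^ 2 = 4) (t₁ t₂ t₃ t₄ : R) :
    g ^ 2 * (t₁ ^ 2 + n * t₂ * (n * t₃) + b * (t₄ ^ 2 + m * t₂ * (m * t₃))) =
      g ^ 2 * (t₁ ^ 2 + b * t₄ ^ 2) + 4 * t₂ * t₃ * (2 + u) := by
  linear_combination t₂ * t₃ * ((g * n + u + 2) * hn + b * (g * m + v) * hm + huv)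

def TracelessSolution (b : ℤ) (X Y : Matrix (Fin 2) (Fin 2) ℤ) : Prop :=
  ∃ t₁ t₂ t₃ s₁ s₂ s₃ : ℤ, X = !![t₁, t₂; t₃, -t₁] ∧ Y = !![s₁, s₂; s₃, -s₁] ∧
    t₁ ^ 2 + t₂ * t₃ + b * (s₁ ^ 2 + s₂ * s₃) = -2

def ScalarSolution (b : ℤ) (X Y : Matrix (Fin 2) (Fin 2) ℤ) : Prop :=
  ∃ t₁ t₂ t₃ t₄ : ℤ, X = !![t₁, t₂; t₃, -t₁] ∧ Y = t₄ • (1 : Matrix (Fin 2) (Fin 2) ℤ) ∧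
    t₁ ^ 2 + t₂ * t₃ + b * t₄ ^ 2 = -2

def NormFourSolution (b : ℤ) (X Y : Matrix (Fin 2) (Fin 2) ℤ) : Prop :=
  ∃ t₁ t₂ t₃ t₄ u v x y g : ℤ, u ≠ -2 ∧ g = Int.gcd v (u + 2) ∧
    -2 * x = u * t₁ + v * b * t₄ ∧ -2 * y = v * t₁ - u * t₄ ∧
    X = !![t₁, ((u + 2) / g) * t₂; ((u + 2) / g) * t₃, x] ∧
    Y = !![t₄, (v / g) * t₂; (v / g) * t₃, y] ∧
    u ^ 2 + b * v ^ 2 = 4 ∧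
    g ^ 2 * (t₁ ^ 2 + b * t₄ ^ 2) + 4 * t₂ * t₃ * (2 + u) = -2 * g ^ 2

theorem exists_norm_four_of_traces_ne_zero {b x₁ x₂ x₃ x₄ y₁ y₂ y₃ y₄ : ℤ} (hb : b ≠ 0)
    (hnsq : ¬ ∃ s : ℤ, -b = s ^ 2)
    (E₁ : x₁ ^ 2 + x₂ * x₃ + b * (y₁ ^ 2 + y₂ * y₃) = -2)
    (E₂ : (x₁ + x₄) * x₂ + b * (y₁ + y₄) * y₂ = 0)
    (E₃ : (x₁ + x₄) * x₃ + b * (y₁ + y₄) * y₃ = 0)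
    (E₄ : x₄ ^ 2 + x₂ * x₃ + b * (y₄ ^ 2 + y₂ * y₃) = -2)
    (hT : x₁ + x₄ ≠ 0) (hS : y₁ + y₄ ≠ 0) :
    ∃ u v : ℤ, u ^ 2 + b * v ^ 2 = 4 ∧ v ≠ 0 ∧ u ≠ -2 ∧
      -2 * x₄ = u * x₁ + v * b * y₁ ∧ -2 * y₄ = v * x₁ - u * y₁ ∧
      v * x₂ = (u + 2) * y₂ ∧ v * x₃ = (u + 2) * y₃ := by
  obtain ⟨T, rfl⟩ : ∃ T, x₄ = T - x₁ := ⟨x₁ + x₄, by ring⟩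
  obtain ⟨S, rfl⟩ : ∃ S, y₄ = S - y₁ := ⟨y₁ + y₄, by ring⟩
  simp only [add_sub_cancel] at hT hS E₂ E₃
  obtain ⟨c, hc⟩ : ∃ c, c = T * x₁ + b * S * y₁ := ⟨_, rfl⟩
  have hc₂ : T ^ 2 + b * S ^ 2 = 2 * c := by linear_combination E₄ - E₁ - 2 * hc
  have hc₀ : c ≠ 0 := by
    intro h
    exact Int.sq_add_mul_sq_ne_zero hnsq T hS (by rw [hc₂, h, mul_zero])
  have cancel : ∀ {p q : ℤ}, c * p = c * q → p = q := mul_left_cancel₀ hc₀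
  -- `u = (b S² - T²) / c` and `v = -2 S T / c` are integers: `c` divides both numerators
  have hdet : c ^ 2 + 2 * b * S ^ 2 = 2 * c * (x₁ * (T - x₁) - x₂ * x₃) := by
    linear_combination -(c - b * S * y₁ + T * x₁) * hc + T * x₃ * E₂ - b * S * y₂ * E₃ +
      b * S ^ 2 * E₁ - (x₁ ^ 2 + x₂ * x₃) * hc₂ + 2 * c * hc
  obtain ⟨u, hu⟩ : ∃ u, c * u = b * S ^ 2 - T ^ 2 :=
    ⟨2 * (x₁ * (T - x₁) - x₂ * x₃) - c - 2, by linear_combination -hdet + hc₂⟩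
  obtain ⟨v, hv⟩ : ∃ v, c * v = -(2 * S * T) := by
    refine ⟨x₁ * (S - y₁) + (T - x₁) * y₁ - x₂ * y₃ - x₃ * y₂,
      mul_left_cancel₀ (mul_ne_zero hb hS) ?_⟩
    linear_combination
      c * x₁ * hc₂ + c * (2 * x₁ - T) * hc - c * x₂ * E₃ - c * x₃ * E₂ + T * hdet
  refine ⟨u, v, ?_, ?_, ?_, ?_, ?_, ?_, ?_⟩
  · refine cancel (cancel ?_)
    linear_combination (c * u + b * S ^ 2 - T ^ 2) * hu + b * (c * v - 2 * S * T) * hv +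
      (T ^ 2 + b * S ^ 2 + 2 * c) * hc₂
  · rintro rfl
    exact mul_ne_zero (mul_ne_zero two_ne_zero hS) hT (by linear_combination hv)
  · rintro rfl
    exact mul_ne_zero two_ne_zero (mul_ne_zero hb (pow_ne_zero 2 hS))
      (by linear_combination hc₂ - hu)
  · exact cancel (by linear_combination -x₁ * hu - b * y₁ * hv - x₁ * hc₂ - 2 * T * hc)
  · exact cancel (by linear_combination -x₁ * hv + y₁ * hu - y₁ * hc₂ - 2 * S * hc)
  · exact cancel (by linear_combination x₂ * hv - y₂ * hu + y₂ * hc₂ - 2 * S * E₂)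
  · exact cancel (by linear_combination x₃ * hv - y₃ * hu + y₃ * hc₂ - 2 * S * E₃)

section

variable {b : ℤ} {X Y : Matrix (Fin 2) (Fin 2) ℤ}

theorem TracelessSolution.sq_add_smul_sq_eq_neg_two (h : TracelessSolution b X Y) :
    X ^ 2 + b • Y ^ 2 = (-2 : ℤ) • (1 : Matrix (Fin 2) (Fin 2) ℤ) := by
  obtain ⟨t₁, t₂, t₃, s₁, s₂, s₃, rfl, rfl, h⟩ := h
  rw [fin_two_sq_add_smul_sq_eq_neg_two_iff]
  exact ⟨by linear_combination h, by ring, by ring, by linear_combination h⟩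

theorem ScalarSolution.sq_add_smul_sq_eq_neg_two (h : ScalarSolution b X Y) :
    X ^ 2 + b • Y ^ 2 = (-2 : ℤ) • (1 : Matrix (Fin 2) (Fin 2) ℤ) := by
  obtain ⟨t₁, t₂, t₃, t₄, rfl, rfl, h⟩ := h
  rw [smul_one_eq_diagonal, diagonal_fin_two, fin_two_sq_add_smul_sq_eq_neg_two_iff]
  exact ⟨by linear_combination h, by ring, by ring, by linear_combination h⟩

theorem NormFourSolution.sq_add_smul_sq_eq_neg_two (h : NormFourSolution b X Y) :
    X ^ 2 + b • Y ^ 2 = (-2 : ℤ) • (1 : Matrix (Fin 2) (Fin 2) ℤ) := by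
  obtain ⟨t₁, t₂, t₃, t₄, u, v, x, y, g, hu, rfl, hx, hy, rfl, rfl, huv, hrel⟩ := h
  have hg : (v.gcd (u + 2) : ℤ) ≠ 0 := by
    exact_mod_cast (Int.gcd_pos_of_ne_zero_right v (by omega)).ne'
  have hn := Int.mul_ediv_cancel' (Int.gcd_dvd_right v (u + 2))
  have hm := Int.mul_ediv_cancel' (Int.gcd_dvd_left v (u + 2))
  generalize (u + 2) / (v.gcd (u + 2) : ℤ) = n at hn ⊢
  generalize v / (v.gcd (u + 2) : ℤ) = m at hm ⊢
  generalize (v.gcd (u + 2) : ℤ) = g at hg hn hm hrel ⊢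
  have off_diag (t : ℤ) : (t₁ + x) * (n * t) + b * (t₄ + y) * (m * t) = 0 :=
    mul_left_cancel₀ (mul_ne_zero two_ne_zero hg) (by
      linear_combination t * ((2 * t₁ + 2 * x) * hn + b * (2 * t₄ + 2 * y) * hm) -
        t * (u + 2) * hx - t * b * v * hy - t₁ * t * huv)
  rw [fin_two_sq_add_smul_sq_eq_neg_two_iff]
  refine ⟨mul_left_cancel₀ (pow_ne_zero 2 hg) ?_, off_diag t₂, off_diag t₃,
    mul_left_cancel₀ (mul_ne_zero four_ne_zero (pow_ne_zero 2 hg)) ?_⟩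
  · rw [sq_mul_corner_eq_of_norm_eq_four hn hm huv]
    linear_combination hrel
  · linear_combination (-(g ^ 2) * (2 * x - (u * t₁ + v * b * t₄))) * hx -
      b * g ^ 2 * (2 * y - (v * t₁ - u * t₄)) * hy +
      4 * t₂ * t₃ * ((g * n + u + 2) * hn + b * (g * m + v) * hm + huv) +
      (t₁ ^ 2 + b * t₄ ^ 2) * g ^ 2 * huv + 4 * hrel

theorem normFourSolution_of_norm_eq_four {u v x₁ x₂ x₃ x₄ y₁ y₂ y₃ y₄ : ℤ} (hu : u ≠ -2)
    (huv : u ^ 2 + b * v ^ 2 = 4) (hx : -2 * x₄ = u * x₁ + v * b * y₁)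
    (hy : -2 * y₄ = v * x₁ - u * y₁) (h₂ : v * x₂ = (u + 2) * y₂) (h₃ : v * x₃ = (u + 2) * y₃)
    (E₁ : x₁ ^ 2 + x₂ * x₃ + b * (y₁ ^ 2 + y₂ * y₃) = -2) :
    NormFourSolution b !![x₁, x₂; x₃, x₄] !![y₁, y₂; y₃, y₄] := by
  have hu₂ : u + 2 ≠ 0 := by omega
  obtain ⟨t₂, rfl, rfl⟩ := Int.exists_eq_ediv_gcd_mul_of_mul_eq hu₂ h₂
  obtain ⟨t₃, rfl, rfl⟩ := Int.exists_eq_ediv_gcd_mul_of_mul_eq hu₂ h₃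
  refine ⟨x₁, t₂, t₃, y₁, u, v, x₄, y₄, _, hu, rfl, hx, hy, rfl, rfl, huv, ?_⟩
  rw [← sq_mul_corner_eq_of_norm_eq_four (Int.mul_ediv_cancel' (Int.gcd_dvd_right _ _))
    (Int.mul_ediv_cancel' (Int.gcd_dvd_left _ _)) huv, E₁]
  ring

theorem solutions_of_sq_add_smul_sq_eq_neg_two (hb : b ≠ 0) (hnsq : ¬ ∃ s : ℤ, -b = s ^ 2) {p : ℕ}
    (hp : p.Prime) (hpb : (p : ℤ) ∣ b) (hp8 : p % 8 = 5 ∨ p % 8 = 7)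
    (h : X ^ 2 + b • Y ^ 2 = (-2 : ℤ) • (1 : Matrix (Fin 2) (Fin 2) ℤ)) :
    TracelessSolution b X Y ∨ (b > 0 ∧ ScalarSolution b X Y) ∨
      (b < 0 ∧ NormFourSolution b X Y) := by
  obtain ⟨x₁, x₂, x₃, x₄, rfl⟩ : ∃ a b c d, X = !![a, b; c, d] := ⟨_, _, _, _, X.eta_fin_two⟩
  obtain ⟨y₁, y₂, y₃, y₄, rfl⟩ : ∃ a b c d, Y = !![a, b; c, d] := ⟨_, _, _, _, Y.eta_fin_two⟩
  obtain ⟨E₁, E₂, E₃, E₄⟩ := (fin_two_sq_add_smul_sq_eq_neg_two_iff ..).1 h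
  by_cases hT : x₁ + x₄ = 0 <;> by_cases hS : y₁ + y₄ = 0
  · obtain rfl : x₄ = -x₁ := by omega
    obtain rfl : y₄ = -y₁ := by omega
    exact .inl ⟨x₁, x₂, x₃, y₁, y₂, y₃, rfl, rfl, E₁⟩
  · obtain rfl : x₄ = -x₁ := by omega
    have cancel : ∀ {p q : ℤ}, b * (y₁ + y₄) * p = b * (y₁ + y₄) * q → p = q :=
      mul_left_cancel₀ (mul_ne_zero hb hS)
    obtain rfl : y₂ = 0 := cancel (by linear_combination E₂)
    obtain rfl : y₃ = 0 := cancel (by linear_combination E₃)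
    obtain rfl : y₁ = y₄ := cancel (by linear_combination E₁ - E₄)
    rcases hb.lt_or_gt with hb₀ | hb₀
    · exact .inr (.inr ⟨hb₀, normFourSolution_of_norm_eq_four (u := 2) (v := 0) (by norm_num)
        (by norm_num) (by ring) (by ring) (by ring) (by ring) E₁⟩)
    · refine .inr (.inl ⟨hb₀, x₁, x₂, x₃, y₁, rfl, ?_, by linear_combination E₁⟩)
      rw [smul_one_eq_diagonal, diagonal_fin_two]
  · obtain rfl : x₂ = 0 := mul_left_cancel₀ hT (by linear_combination E₂ - b * y₂ * hS)
    have := Fact.mk hp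
    refine (Int.not_sq_modEq_neg_two hp8 x₁ (Int.modEq_iff_dvd.2 ?_)).elim
    exact (hpb.mul_right (y₁ ^ 2 + y₂ * y₃)).trans (dvd_of_eq (by linear_combination E₁))
  · obtain ⟨u, v, huv, hv, hu, hx, hy, h₂, h₃⟩ :=
      exists_norm_four_of_traces_ne_zero hb hnsq E₁ E₂ E₃ E₄ hT hS
    exact .inr (.inr ⟨Int.neg_of_sq_add_mul_sq_eq_four huv hv hb (by omega) hpb,
      normFourSolution_of_norm_eq_four hu huv hx hy h₂ h₃ E₁⟩)

end

theorem stmt_19 (b : ℤ) (hb : b ≠ 0) (hnsq : ¬ ∃ s : ℤ, -b = s ^ 2)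
    (hp : ∃ p : ℕ, p.Prime ∧ (p : ℤ) ∣ b ∧ (p % 8 = 5 ∨ p % 8 = 7))
    (X Y : Matrix (Fin 2) (Fin 2) ℤ) :
    (X ^ 2 + b • Y ^ 2 = (-2 : ℤ) • (1 : Matrix (Fin 2) (Fin 2) ℤ)) ↔
    ((∃ t₁ t₂ t₃ s₁ s₂ s₃ : ℤ, X = !![t₁, t₂; t₃, -t₁] ∧ Y = !![s₁, s₂; s₃, -s₁] ∧
        t₁ ^ 2 + t₂ * t₃ + b * (s₁ ^ 2 + s₂ * s₃) = -2) ∨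
     (b > 0 ∧ ∃ t₁ t₂ t₃ t₄ : ℤ, X = !![t₁, t₂; t₃, -t₁] ∧
        Y = t₄ • (1 : Matrix (Fin 2) (Fin 2) ℤ) ∧ t₁ ^ 2 + t₂ * t₃ + b * t₄ ^ 2 = -2) ∨
     (b < 0 ∧ ∃ t₁ t₂ t₃ t₄ u v x y g : ℤ, u ≠ -2 ∧ g = Int.gcd v (u + 2) ∧
        -2 * x = u * t₁ + v * b * t₄ ∧ -2 * y = v * t₁ - u * t₄ ∧
        X = !![t₁, ((u + 2) / g) * t₂; ((u + 2) / g) * t₃, x] ∧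
        Y = !![t₄, (v / g) * t₂; (v / g) * t₃, y] ∧
        u ^ 2 + b * v ^ 2 = 4 ∧
        g ^ 2 * (t₁ ^ 2 + b * t₄ ^ 2) + 4 * t₂ * t₃ * (2 + u) = -2 * g ^ 2)) := by
  show _ ↔ TracelessSolution b X Y ∨ (b > 0 ∧ ScalarSolution b X Y) ∨
    (b < 0 ∧ NormFourSolution b X Y)
  obtain ⟨p, hp, hpb, hp8⟩ := hp
  refine ⟨solutions_of_sq_add_smul_sq_eq_neg_two hb hnsq hp hpb hp8, ?_⟩
  rintro (h | ⟨-, h⟩ | ⟨-, h⟩) <;> exact h.sq_add_smul_sq_eq_neg_two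
end
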